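/- Let A be invertible sectorial of angle θ with S_θ ⊂ ρ(−A) on a Banach space E, and suppose that for some dense scale E_η ↪ E (η ≥ 0, E_0 = E) the resolvent restricts compatibly: (A_η + λ)^{-1} = (A + λ)^{-1}|_{E_η} for λ ∈ S_θ, where A_η is the part of A in E_η with D(A_η) = E_{η+2}, and moreover ‖u‖_{E_{η+2}} ≤ C(‖u‖_{E_η} + ‖A_η u‖_{E_η}). If A has bounded H^∞-calculus of angle θ on E and A_r ∈ H^∞(θ) for some r with r/2 ∈ ℕ₀, then A_{r+2} also has bounded H^∞-calculus of angle θ on E_{r+2}, with f(A_{r+2}) = f(A_r)|_{E_{r+2}} and ‖f(A_{r+2})‖_{L(E_{r+2})} ≤ C' sup|f| for f ∈ H₀^∞(θ). -/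

import Mathlib

noncomputable section

open MeasureTheory Set

/-- The closed sector `S_θ = {λ : |arg λ| ≤ θ} ∪ {0}`. -/
def Sector (θ : ℝ) : Set ℂ := {z : ℂ | z = 0 ∨ |Complex.arg z| ≤ θ}

variable {X₀ X₁ : Type*} [NormedAddCommGroup X₀] [NormedSpace ℂ X₀]
  [NormedAddCommGroup X₁] [NormedSpace ℂ X₁]

/-- `Rl` is the resolvent of `-A` at `λ`, where the (possibly unbounded) operator `A` in `X₀`
is presented by its domain `X₁` (endowed with the graph norm), the continuous embedding
`J : X₁ → X₀` and its action `A : X₁ → X₀`. -/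
def IsResolventAt (J A : X₁ →L[ℂ] X₀) (lam : ℂ) (Rl : X₀ →L[ℂ] X₁) : Prop :=
  (A + lam • J).comp Rl = ContinuousLinearMap.id ℂ X₀ ∧
  Rl.comp (A + lam • J) = ContinuousLinearMap.id ℂ X₁

/-- `A ∈ 𝒫(K,θ)` : invertible sectorial of angle `θ` with sectorial bound `K`,
witnessed by the resolvent family `R`. -/
def IsSectorial (J A : X₁ →L[ℂ] X₀) (θ K : ℝ) (R : ℂ → X₀ →L[ℂ] X₁) : Prop :=
  ∀ lam ∈ Sector θ, IsResolventAt J A lam (R lam) ∧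
    (1 + ‖lam‖) * ‖J.comp (R lam)‖ ≤ K

/-- A set of bounded operators is `R`-bounded with `R`-bound `C` (formulated via
averages over all choices of signs, which coincides with the Rademacher formulation). -/
def RademacherBound {X : Type*} [NormedAddCommGroup X] [NormedSpace ℂ X]
    (E : Set (X →L[ℂ] X)) (C : ℝ) : Prop :=
  ∀ (N : ℕ) (T : Fin N → X →L[ℂ] X) (x : Fin N → X), (∀ i, T i ∈ E) →
    ∑ ε : Fin N → Bool, ‖∑ i, (if ε i then T i (x i) else -(T i (x i)))‖ ^ 2
      ≤ C ^ 2 * ∑ ε : Fin N → Bool, ‖∑ i, (if ε i then x i else -(x i))‖ ^ 2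

/-- The constant `S(θ)`. -/
def Sfun (θ : ℝ) : ℝ := if Real.pi / 2 ≤ θ then Real.sin θ else 1

/-- The class `H₀^∞(φ)` of bounded holomorphic functions on `ℂ \ S_φ` with decay. -/
def HzeroClass (φ : ℝ) (f : ℂ → ℂ) : Prop :=
  DifferentiableOn ℂ f (Sector φ)ᶜ ∧
  ∃ c > (0:ℝ), ∃ η > (0:ℝ), ∀ z ∈ (Sector φ)ᶜ,
    ‖f z‖ ≤ c * (‖z‖ / (1 + ‖z‖ ^ 2)) ^ η

/-- The Dunford integral `(2πi)⁻¹ ∫_{Γ_θ} f(λ)(A+λ)⁻¹ x dλ` along the boundary of the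
sector of angle `θ`, for the operator with resolvent family `R`. -/
def dunford (J : X₁ →L[ℂ] X₀) (R : ℂ → X₀ →L[ℂ] X₁) (θ : ℝ) (f : ℂ → ℂ) (x : X₀) : X₀ :=
  (2 * (Real.pi : ℂ) * Complex.I)⁻¹ •
    ((∫ r in Set.Ioi (0:ℝ),
        (f ((r : ℂ) * Complex.exp ((θ : ℂ) * Complex.I)) * Complex.exp ((θ : ℂ) * Complex.I)) •
          J (R ((r : ℂ) * Complex.exp ((θ : ℂ) * Complex.I)) x)) -
      ∫ r in Set.Ioi (0:ℝ),
        (f ((r : ℂ) * Complex.exp (-(θ : ℂ) * Complex.I)) * Complex.exp (-(θ : ℂ) * Complex.I)) •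
          J (R ((r : ℂ) * Complex.exp (-(θ : ℂ) * Complex.I)) x))

/-- Bounded `H^∞(φ)`-calculus bound `C` for the operator with resolvent family `R`,
the Dunford contour being `Γ_θ`. -/
def HinftyBound (J : X₁ →L[ℂ] X₀) (R : ℂ → X₀ →L[ℂ] X₁) (θ φ C : ℝ) : Prop :=
  ∀ f : ℂ → ℂ, HzeroClass φ f →
    ∀ x : X₀, ‖dunford J R θ f x‖ ≤ C * (⨆ z ∈ (Sector φ)ᶜ, ‖f z‖) * ‖x‖

/-- Bounded `H^∞`-calculus of angle `φ`. -/
def HasBddHinftyCalculus (J A : X₁ →L[ℂ] X₀) (φ : ℝ) : Prop :=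
  ∃ θ ∈ Set.Ioo φ Real.pi, ∃ (R : ℂ → X₀ →L[ℂ] X₁) (K C : ℝ),
    IsSectorial J A θ K R ∧ HinftyBound J R θ φ C

/-- `R`-bounded `H^∞`-calculus of angle `φ`. -/
def HasRBddHinftyCalculus (J A : X₁ →L[ℂ] X₀) (φ : ℝ) : Prop :=
  ∃ θ ∈ Set.Ioo φ Real.pi, ∃ (R : ℂ → X₀ →L[ℂ] X₁) (K : ℝ),
    IsSectorial J A θ K R ∧
    ∃ β : ℝ, RademacherBound {T : X₀ →L[ℂ] X₀ | ∃ f : ℂ → ℂ, HzeroClass φ f ∧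
      (∀ z ∈ (Sector φ)ᶜ, ‖f z‖ ≤ 1) ∧ ∀ x, T x = dunford J R θ f x} β

/-- The UMD property, via the unconditionality of martingale differences. -/
def IsUMD (X : Type*) [NormedAddCommGroup X] [NormedSpace ℂ X] [CompleteSpace X] : Prop :=
  ∀ p : ℝ, 1 < p → ∃ β : ℝ, 0 < β ∧
    ∀ (Ω : Type) (mΩ : MeasurableSpace Ω) (μ : MeasureTheory.Measure Ω)
      (ℱ : MeasureTheory.Filtration ℕ mΩ) (f : ℕ → Ω → X) (ε : ℕ → ℝ),
      MeasureTheory.IsProbabilityMeasure μ → MeasureTheory.Martingale f ℱ μ →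
      (∀ k, ε k = 1 ∨ ε k = -1) → ∀ N : ℕ,
      MeasureTheory.eLpNorm
          (fun ω => ∑ k ∈ Finset.range N, (ε k : ℂ) • (f (k+1) ω - f k ω))
          (ENNReal.ofReal p) μ
        ≤ ENNReal.ofReal β * MeasureTheory.eLpNorm (f N) (ENNReal.ofReal p) μ

/-!
For `x` in the domain, `f(A) x = A⁻¹ f(A) A x`: every resolvent `(A + λ)⁻¹` commutes with `A`,
and the bounded operator `A⁻¹ = (A + 0)⁻¹ : E_r → E_{r+2}` can be pulled out of the Dunford
integral, which converges absolutely thanks to the decay of `f` and the sectorial bound. Hence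
`‖f(A) x‖_{E_{r+2}} ≤ ‖A⁻¹‖ C sup |f| ‖A‖ ‖x‖_{E_{r+2}}`.
-/

open Complex Real

namespace IsResolventAt

variable {J A : X₁ →L[ℂ] X₀} {lam mu : ℂ} {Rl Rm R₀ : X₀ →L[ℂ] X₁}

lemma apply_right (h : IsResolventAt J A lam Rl) (v : X₀) : A (Rl v) + lam • J (Rl v) = v := by
  simpa using DFunLike.congr_fun h.1 v

lemma apply_left (h : IsResolventAt J A lam Rl) (u : X₁) : Rl (A u) + lam • Rl (J u) = u := by
  simpa using DFunLike.congr_fun h.2 u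

lemma apply_sub_apply (hl : IsResolventAt J A lam Rl) (hm : IsResolventAt J A mu Rm) (v : X₀) :
    Rm v - Rl v = (lam - mu) • Rm (J (Rl v)) := by
  calc Rm v - Rl v
      = Rm (A (Rl v) + lam • J (Rl v)) - (Rm (A (Rl v)) + mu • Rm (J (Rl v))) := by
        rw [hl.apply_right, hm.apply_left]
    _ = (lam - mu) • Rm (J (Rl v)) := by
        rw [map_add, map_smul, sub_smul]; abel

lemma apply_embedding_eq (hl : IsResolventAt J A lam Rl) (h₀ : IsResolventAt J A 0 R₀) (x : X₁) :
    Rl (J x) = R₀ (J (Rl (A x))) := by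
  set w := Rl (J x)
  have hAx : J (Rl (A x)) = J x - lam • J w := by
    rw [eq_sub_iff_add_eq, ← map_smul, ← map_add, hl.apply_left]
  have hinv : R₀ (A w) = w := by simpa using h₀.apply_left w
  have hJx : R₀ (J x) = w + lam • R₀ (J w) := by
    conv_lhs => rw [← hl.apply_right (J x)]
    rw [map_add, map_smul, hinv]
  rw [hAx, map_sub, map_smul, hJx, add_sub_cancel_right]

end IsResolventAt

namespace IsSectorial

variable {J A : X₁ →L[ℂ] X₀} {θ K : ℝ} {R : ℂ → X₀ →L[ℂ] X₁} {lam : ℂ}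

lemma nonneg (h : IsSectorial J A θ K R) : 0 ≤ K :=
  le_trans (by positivity) (h 0 (Or.inl rfl)).2

lemma norm_apply_le (h : IsSectorial J A θ K R) (hlam : lam ∈ Sector θ) (v : X₀) :
    ‖J (R lam v)‖ ≤ K / (1 + ‖lam‖) * ‖v‖ :=
  calc ‖J (R lam v)‖ ≤ ‖J.comp (R lam)‖ * ‖v‖ := (J.comp (R lam)).le_opNorm v
    _ ≤ K / (1 + ‖lam‖) * ‖v‖ := by
        gcongr
        rw [le_div_iff₀ (by positivity), mul_comm]
        exact (h lam hlam).2

lemma norm_apply_le_mul (h : IsSectorial J A θ K R) (hlam : lam ∈ Sector θ) (v : X₀) :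
    ‖J (R lam v)‖ ≤ K * ‖v‖ :=
  (h.norm_apply_le hlam v).trans <| by
    gcongr
    exact div_le_self h.nonneg (le_add_of_nonneg_right (norm_nonneg lam))

lemma lipschitzOnWith (h : IsSectorial J A θ K R) (v : X₀) :
    LipschitzOnWith (K ^ 2 * ‖v‖).toNNReal (fun lam => J (R lam v)) (Sector θ) := by
  refine LipschitzOnWith.of_dist_le' fun lam hlam mu hmu => ?_
  rw [dist_eq_norm, dist_eq_norm, ← map_sub, (h mu hmu).1.apply_sub_apply (h lam hlam).1,
    map_smul, norm_smul, norm_sub_rev]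
  calc ‖lam - mu‖ * ‖J (R lam (J (R mu v)))‖ ≤ ‖lam - mu‖ * (K * (K * ‖v‖)) := by
        gcongr
        exact (h.norm_apply_le_mul hlam _).trans
          (by gcongr; exacts [h.nonneg, h.norm_apply_le_mul hmu v])
    _ = K ^ 2 * ‖v‖ * ‖lam - mu‖ := by ring

lemma continuousOn (h : IsSectorial J A θ K R) (v : X₀) :
    ContinuousOn (fun lam => J (R lam v)) (Sector θ) :=
  (h.lipschitzOnWith v).continuousOn

end IsSectorial

lemma ofReal_mul_exp_mem_sector_diff {θ θc a r : ℝ} (hθ : θ < θc) (ha : |a| = θc)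
    (ha' : a ∈ Ioc (-π) π) (hr : 0 < r) :
    (r : ℂ) * exp (a * I) ∈ Sector θc \ Sector θ := by
  have harg : arg ((r : ℂ) * exp (a * I)) = a := by
    rwa [arg_real_mul _ hr, arg_exp_mul_I, toIocMod_eq_self, neg_add_eq_sub, two_mul,
      add_sub_cancel_right]
  have hne : (r : ℂ) * exp (a * I) ≠ 0 := mul_ne_zero (by exact_mod_cast hr.ne') (exp_ne_zero _)
  refine ⟨Or.inr (by rw [harg, ha]), ?_⟩
  rintro (h0 | hle)
  · exact hne h0
  · rw [harg, ha] at hle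
    linarith

lemma integrableOn_decay_weight {η : ℝ} (hη : 0 < η) :
    IntegrableOn (fun r : ℝ => (r / (1 + r ^ 2)) ^ η / (1 + r)) (Ioi 0) := by
  have hmeas : AEStronglyMeasurable (fun r : ℝ => (r / (1 + r ^ 2)) ^ η / (1 + r)) :=
    (by fun_prop : Measurable _).aestronglyMeasurable
  have hnear : IntegrableOn (fun r : ℝ => (r / (1 + r ^ 2)) ^ η / (1 + r)) (Ioc 0 1) := by
    refine Integrable.mono' (intervalIntegral.intervalIntegrable_rpow' (r := η) (by linarith)
      |>.1) hmeas.restrict ?_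
    filter_upwards [self_mem_ae_restrict measurableSet_Ioc] with r hr
    obtain ⟨hr0, -⟩ := hr
    rw [Real.norm_of_nonneg (by positivity)]
    calc (r / (1 + r ^ 2)) ^ η / (1 + r) ≤ (r / (1 + r ^ 2)) ^ η :=
          div_le_self (by positivity) (by linarith)
      _ ≤ r ^ η := by gcongr; exact div_le_self hr0.le (by nlinarith)
  have hfar : IntegrableOn (fun r : ℝ => (r / (1 + r ^ 2)) ^ η / (1 + r)) (Ioi 1) := by
    refine Integrable.mono' (integrableOn_Ioi_rpow_of_lt (by linarith : -1 - η < -1) one_pos)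
      hmeas.restrict ?_
    filter_upwards [self_mem_ae_restrict measurableSet_Ioi] with r (hr : 1 < r)
    have hr0 : 0 < r := one_pos.trans hr
    rw [Real.norm_of_nonneg (by positivity)]
    calc (r / (1 + r ^ 2)) ^ η / (1 + r) ≤ r⁻¹ ^ η / r := by
          gcongr
          · rw [div_le_iff₀ (by positivity)]; field_simp; nlinarith
          · linarith
      _ = r ^ (-1 - η) := by
          rw [Real.rpow_sub hr0, Real.rpow_neg_one, Real.inv_rpow hr0.le]; field_simp
  rw [← Ioc_union_Ioi_eq_Ioi zero_le_one]
  exact hnear.union hfar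

def rayIntegral (J : X₁ →L[ℂ] X₀) (R : ℂ → X₀ →L[ℂ] X₁) (f : ℂ → ℂ) (e : ℂ) (v : X₀) : X₀ :=
  ∫ r in Ioi (0 : ℝ), (f (r * e) * e) • J (R (r * e) v)

lemma dunford_eq_rayIntegral_sub (J : X₁ →L[ℂ] X₀) (R : ℂ → X₀ →L[ℂ] X₁) (θ : ℝ) (f : ℂ → ℂ)
    (v : X₀) :
    dunford J R θ f v = (2 * (π : ℂ) * I)⁻¹ •
      (rayIntegral J R f (exp (θ * I)) v - rayIntegral J R f (exp (-θ * I)) v) :=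
  rfl

section RayIntegral

variable {J A : X₁ →L[ℂ] X₀} {θ θc K : ℝ} {R : ℂ → X₀ →L[ℂ] X₁} {f : ℂ → ℂ} {e : ℂ}

lemma integrableOn_rayIntegrand (hA : IsSectorial J A θc K R) (hf : HzeroClass θ f)
    (he : ‖e‖ = 1) (hray : ∀ r : ℝ, 0 < r → (r : ℂ) * e ∈ Sector θc \ Sector θ) (v : X₀) :
    IntegrableOn (fun r : ℝ => (f (r * e) * e) • J (R (r * e) v)) (Ioi 0) := by
  obtain ⟨hfd, c, -, η, hη, hfc⟩ := hf
  have hcont : ContinuousOn (fun r : ℝ => (f (r * e) * e) • J (R (r * e) v)) (Ioi 0) := by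
    have hline : Continuous fun r : ℝ => (r : ℂ) * e := by fun_prop
    exact ((hfd.continuousOn.comp hline.continuousOn fun r hr => (hray r hr).2).mul
      continuousOn_const).smul
      ((hA.continuousOn v).comp hline.continuousOn fun r hr => (hray r hr).1)
  refine ((integrableOn_decay_weight hη).const_mul (c * K * ‖v‖)).mono'
    (hcont.aestronglyMeasurable measurableSet_Ioi) ?_
  filter_upwards [self_mem_ae_restrict measurableSet_Ioi] with r (hr : 0 < r)
  have hnorm : ‖(r : ℂ) * e‖ = r := by simp [he, hr.le]
  have hfr := hfc _ (hray r hr).2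
  have hRr := hA.norm_apply_le (hray r hr).1 v
  rw [hnorm] at hfr hRr
  calc ‖(f (r * e) * e) • J (R (r * e) v)‖ = ‖f (r * e)‖ * ‖J (R (r * e) v)‖ := by
        rw [norm_smul, norm_mul, he, mul_one]
    _ ≤ c * (r / (1 + r ^ 2)) ^ η * (K / (1 + r) * ‖v‖) :=
        mul_le_mul hfr hRr (norm_nonneg _) ((norm_nonneg _).trans hfr)
    _ = c * K * ‖v‖ * ((r / (1 + r ^ 2)) ^ η / (1 + r)) := by ring

lemma rayIntegral_embedding_eq [CompleteSpace X₀] (hA : IsSectorial J A θc K R)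
    (hf : HzeroClass θ f) (he : ‖e‖ = 1)
    (hray : ∀ r : ℝ, 0 < r → (r : ℂ) * e ∈ Sector θc \ Sector θ) (x : X₁) :
    rayIntegral J R f e (J x) = J (R 0 (rayIntegral J R f e (A x))) := by
  have h₀ := (hA 0 (Or.inl rfl)).1
  calc rayIntegral J R f e (J x)
      = ∫ r in Ioi (0 : ℝ), J.comp (R 0) ((f (r * e) * e) • J (R (r * e) (A x))) :=
        setIntegral_congr_fun measurableSet_Ioi fun r hr => by
          simp only [ContinuousLinearMap.comp_apply, map_smul,
            (hA _ (hray r hr).1).1.apply_embedding_eq h₀ x]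
    _ = J (R 0 (rayIntegral J R f e (A x))) :=
        (J.comp (R 0)).integral_comp_comm (integrableOn_rayIntegrand hA hf he hray (A x))

end RayIntegral

lemma dunford_embedding_eq [CompleteSpace X₀] {J A : X₁ →L[ℂ] X₀} {θ θc K : ℝ}
    {R : ℂ → X₀ →L[ℂ] X₁} {f : ℂ → ℂ} (hA : IsSectorial J A θc K R) (hθ : θ < θc)
    (hθc₀ : 0 ≤ θc) (hθcπ : θc < π) (hf : HzeroClass θ f) (x : X₁) :
    dunford J R θc f (J x) = J (R 0 (dunford J R θc f (A x))) := by
  have hray : ∀ a : ℝ, |a| = θc → a ∈ Ioc (-π) π →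
      rayIntegral J R f (exp (a * I)) (J x) = J (R 0 (rayIntegral J R f (exp (a * I)) (A x))) :=
    fun a ha ha' => rayIntegral_embedding_eq hA hf (norm_exp_ofReal_mul_I a)
      (fun r hr => ofReal_mul_exp_mem_sector_diff hθ ha ha' hr) x
  rw [dunford_eq_rayIntegral_sub, dunford_eq_rayIntegral_sub, ← ofReal_neg,
    hray θc (abs_of_nonneg hθc₀) ⟨by linarith, hθcπ.le⟩,
    hray (-θc) (by rw [abs_neg, abs_of_nonneg hθc₀]) ⟨by linarith, by linarith⟩,
    ← map_sub, ← map_sub, ← map_smul, ← map_smul]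

theorem hinfty_bootstrap_general
    {Er Er2 : Type*}
    [NormedAddCommGroup Er] [NormedSpace ℂ Er] [CompleteSpace Er]
    [NormedAddCommGroup Er2] [NormedSpace ℂ Er2]
    (j2 : Er2 →L[ℂ] Er)
    (Ar : Er2 →L[ℂ] Er)
    (θ θc K : ℝ) (hθ : θ ∈ Set.Ioo 0 Real.pi) (hθc : θc ∈ Set.Ioo θ Real.pi)
    (Rr : ℂ → Er →L[ℂ] Er2) (hsect : IsSectorial j2 Ar θc K Rr)
    (C : ℝ) (hcal : HinftyBound j2 Rr θc θ C) :
    ∃ C' : ℝ, ∀ f : ℂ → ℂ, HzeroClass θ f → ∀ x : Er2,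
      ∃ y : Er2, j2 y = dunford j2 Rr θc f (j2 x) ∧
        ‖y‖ ≤ C' * (⨆ z ∈ (Sector θ)ᶜ, ‖f z‖) * ‖x‖ := by
  refine ⟨‖Rr 0‖ * max C 0 * ‖Ar‖, fun f hf x => ⟨Rr 0 (dunford j2 Rr θc f (Ar x)), ?_, ?_⟩⟩
  · exact (dunford_embedding_eq hsect hθc.1 (hθ.1.trans hθc.1).le hθc.2 hf x).symm
  have hsup : 0 ≤ ⨆ z ∈ (Sector θ)ᶜ, ‖f z‖ :=
    Real.iSup_nonneg fun _ => Real.iSup_nonneg fun _ => norm_nonneg _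
  calc ‖Rr 0 (dunford j2 Rr θc f (Ar x))‖ ≤ ‖Rr 0‖ * ‖dunford j2 Rr θc f (Ar x)‖ :=
        (Rr 0).le_opNorm _
    _ ≤ ‖Rr 0‖ * (max C 0 * (⨆ z ∈ (Sector θ)ᶜ, ‖f z‖) * (‖Ar‖ * ‖x‖)) := by
        gcongr
        refine (hcal f hf (Ar x)).trans ?_
        gcongr
        exacts [le_max_left C 0, Ar.le_opNorm x]
    _ = ‖Rr 0‖ * max C 0 * ‖Ar‖ * (⨆ z ∈ (Sector θ)ᶜ, ‖f z‖) * ‖x‖ := by ring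

/-- Bootstrap of the bounded `H^∞`-calculus along a compatible scale of
spaces.  `Er` plays the role of `E_r`, `Er2` of `E_{r+2}` (the domain of the part `A_r` of
`A` in `E_r`), and `Er4` of `E_{r+4}` (the domain of the part `A_{r+2}` of `A` in
`E_{r+2}`); the resolvents restrict compatibly and the `E_{r+2}`-norm is equivalent to the
graph norm of `A_r`.  If `A_r` has bounded `H^∞(θ)`-calculus on `E_r`, then `A_{r+2}` has
bounded `H^∞(θ)`-calculus on `E_{r+2}`, given by restriction: for every `f ∈ H₀^∞(θ)` and
`x ∈ E_{r+2}`, `f(A_r) x ∈ E_{r+2}` with `‖f(A_{r+2}) x‖_{E_{r+2}} ≤ C' sup |f| ‖x‖`. -/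
theorem hinfty_bootstrap
    {Er Er2 Er4 : Type*}
    [NormedAddCommGroup Er] [NormedSpace ℂ Er] [CompleteSpace Er]
    [NormedAddCommGroup Er2] [NormedSpace ℂ Er2] [CompleteSpace Er2]
    [NormedAddCommGroup Er4] [NormedSpace ℂ Er4] [CompleteSpace Er4]
    (j2 : Er2 →L[ℂ] Er) (j4 : Er4 →L[ℂ] Er2)
    (hj2 : Function.Injective j2) (hj4 : Function.Injective j4)
    (Ar : Er2 →L[ℂ] Er) (Ar2 : Er4 →L[ℂ] Er2)
    -- `A_{r+2}` is the part of `A_r` in `E_{r+2}`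
    (hpart : j2.comp Ar2 = Ar.comp j4)
    (θ θc K : ℝ) (hθ : θ ∈ Set.Ioo 0 Real.pi) (hθc : θc ∈ Set.Ioo θ Real.pi)
    (Rr : ℂ → Er →L[ℂ] Er2) (hsect : IsSectorial j2 Ar θc K Rr)
    (R2 : ℂ → Er2 →L[ℂ] Er4)
    -- the resolvent of `A_r` restricts compatibly to `E_{r+2}`
    (hres2 : ∀ lam ∈ Sector θc, IsResolventAt j4 Ar2 lam (R2 lam) ∧
      (Rr lam).comp j2 = j4.comp (R2 lam))
    -- graph norm equivalence `‖u‖_{E_{r+4}} ≤ C (‖u‖_{E_{r+2}} + ‖A_{r+2} u‖_{E_{r+2}})`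
    (Cg : ℝ) (hgraph : ∀ u : Er4, ‖u‖ ≤ Cg * (‖j4 u‖ + ‖Ar2 u‖))
    (C : ℝ) (hcal : HinftyBound j2 Rr θc θ C) :
    ∃ C' : ℝ, ∀ f : ℂ → ℂ, HzeroClass θ f → ∀ x : Er2,
      ∃ y : Er2, j2 y = dunford j2 Rr θc f (j2 x) ∧
        ‖y‖ ≤ C' * (⨆ z ∈ (Sector θ)ᶜ, ‖f z‖) * ‖x‖ :=
  hinfty_bootstrap_general j2 Ar θ θc K hθ hθc Rr hsect C hcal
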